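/- arXiv:math/0111152 — 4 statements merged into one kernel-verified Lean document; each statement's English description precedes it below -/
import Mathlib

section
/- If c=max_{i=1,…,k} p_i < 1, then the operator T_p is a contraction on the space of distribution functions with the sup metric, with contraction constant c: d_sup(T_p F, T_p G) ≤ c · d_sup(F,G) for all distribution functions F, G. -/
open Set Filter Topology

/-- A distribution function on `[0,1]`: non-decreasing, right-continuous,
`F 0 = 0` and `F 1 = 1`. -/
def IsDF (F : ℝ → ℝ) : Prop :=
  MonotoneOn F (Set.Icc 0 1) ∧
  (∀ a ∈ Set.Ico (0:ℝ) 1, ContinuousWithinAt F (Set.Icc a 1) a) ∧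
  F 0 = 0 ∧ F 1 = 1

/-- The sup distance between two functions, over `[0,1]`. -/
noncomputable def dsup (F G : ℝ → ℝ) : ℝ :=
  ⨆ x : Set.Icc (0:ℝ) 1, |F x - G x|

/-- If `c = max_i p_i < 1` then `T_p` is a contraction with constant `c` on the
space of distribution functions with the sup metric:
`d_sup (T_p F, T_p G) ≤ c · d_sup (F, G)`. -/
theorem stmt5 (n : ℕ) (p : Fin (n+1) → ℝ) (δ : Fin n → ℝ)
    (winv : Fin (n+1) → ℝ → ℝ)
    (F G TF TG : ℝ → ℝ)
    (hF : IsDF F) (hG : IsDF G)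
    (hp : ∀ i, 0 ≤ p i) (hδ : ∀ j, 0 ≤ δ j)
    (hsum : ∑ i, p i + ∑ j, δ j = 1)
    (hpiece : ∀ x ∈ Set.Icc (0:ℝ) 1, ∃ i : Fin (n+1),
      winv i x ∈ Set.Icc (0:ℝ) 1 ∧
      TF x = p i * F (winv i x) + (∑ j ∈ Finset.Iio i, p j) +
        (∑ j ∈ Finset.filter (fun j : Fin n => (j : ℕ) < (i : ℕ)) Finset.univ, δ j) ∧
      TG x = p i * G (winv i x) + (∑ j ∈ Finset.Iio i, p j) +
        (∑ j ∈ Finset.filter (fun j : Fin n => (j : ℕ) < (i : ℕ)) Finset.univ, δ j))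
    (hc : Finset.univ.sup' Finset.univ_nonempty p < 1) :
    dsup TF TG ≤ (Finset.univ.sup' Finset.univ_nonempty p) * dsup F G := by
  set c := Finset.univ.sup' Finset.univ_nonempty p with hcdef
  have hc0 : 0 ≤ c := le_trans (hp 0) (Finset.le_sup' p (Finset.mem_univ 0))
  -- bounds: F, G between 0 and 1 on [0,1]
  have hbF : ∀ x ∈ Set.Icc (0:ℝ) 1, 0 ≤ F x ∧ F x ≤ 1 := by
    intro x hx
    obtain ⟨hm, _, h0, h1⟩ := hF
    constructor
    · have := hm (by constructor <;> norm_num) hx hx.1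
      linarith [this]
    · have := hm hx (by constructor <;> norm_num) hx.2
      linarith [this]
  have hbG : ∀ x ∈ Set.Icc (0:ℝ) 1, 0 ≤ G x ∧ G x ≤ 1 := by
    intro x hx
    obtain ⟨hm, _, h0, h1⟩ := hG
    constructor
    · have := hm (by constructor <;> norm_num) hx hx.1
      linarith [this]
    · have := hm hx (by constructor <;> norm_num) hx.2
      linarith [this]
  have hbdd : BddAbove (Set.range fun x : Set.Icc (0:ℝ) 1 => |F x - G x|) := by
    refine ⟨1, ?_⟩
    rintro y ⟨x, rfl⟩
    have hFx := hbF x x.2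
    have hGx := hbG x x.2
    rw [abs_le]; constructor <;> linarith
  have hDle : ∀ x ∈ Set.Icc (0:ℝ) 1, |F x - G x| ≤ dsup F G := by
    intro x hx
    exact le_ciSup hbdd (⟨x, hx⟩ : Set.Icc (0:ℝ) 1)
  have hD0 : 0 ≤ dsup F G := le_trans (abs_nonneg _) (hDle 0 (by constructor <;> norm_num))
  apply ciSup_le
  rintro ⟨x, hx⟩
  obtain ⟨i, hw, hTF, hTG⟩ := hpiece x hx
  have : |TF x - TG x| = p i * |F (winv i x) - G (winv i x)| := by
    rw [hTF, hTG]
    have : p i * F (winv i x) + ∑ j ∈ Finset.Iio i, p j + ∑ j ∈ Finset.filter (fun j : Fin n => (j:ℕ) < (i:ℕ)) Finset.univ, δ j -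
        (p i * G (winv i x) + ∑ j ∈ Finset.Iio i, p j + ∑ j ∈ Finset.filter (fun j : Fin n => (j:ℕ) < (i:ℕ)) Finset.univ, δ j)
        = p i * (F (winv i x) - G (winv i x)) := by ring
    rw [this, abs_mul, abs_of_nonneg (hp i)]
  calc |TF x - TG x| = p i * |F (winv i x) - G (winv i x)| := this
    _ ≤ c * dsup F G := by
        apply mul_le_mul (Finset.le_sup' p (Finset.mem_univ i)) (hDle _ hw) (abs_nonneg _) hc0
end

section
/- Stability of fixed points in the parameters: if T_p F_1=F_1 and T_{p*} F_2=F_2 where both operators use the same maps w_i and shifts δ_j, and c=max_i max(p_i,p*_i)<1, then d_sup(F_1,F_2) ≤ (1/(1-c)) Σ_{j=1}^k |p_j - p*_j|. -/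
open Set Filter Topology

theorem IsDF.mem_Icc {F : ℝ → ℝ} (hF : IsDF F) {x : ℝ} (hx : x ∈ Icc (0:ℝ) 1) :
    F x ∈ Icc (0:ℝ) 1 := by
  obtain ⟨hmono, -, h0, h1⟩ := hF
  refine ⟨?_, ?_⟩
  · simpa [h0] using hmono (left_mem_Icc.2 zero_le_one) hx hx.1
  · simpa [h1] using hmono hx (right_mem_Icc.2 zero_le_one) hx.2

theorem IsDF.abs_le_one {F : ℝ → ℝ} (hF : IsDF F) {x : ℝ} (hx : x ∈ Icc (0:ℝ) 1) :
    |F x| ≤ 1 :=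
  abs_le.2 ⟨by linarith [(hF.mem_Icc hx).1], (hF.mem_Icc hx).2⟩

theorem abs_sub_le_dsup {F G : ℝ → ℝ} (hF : IsDF F) (hG : IsDF G) {x : ℝ}
    (hx : x ∈ Icc (0:ℝ) 1) : |F x - G x| ≤ dsup F G := by
  refine le_ciSup (f := fun y : Icc (0:ℝ) 1 => |F y - G y|) ⟨1, ?_⟩ ⟨x, hx⟩
  rintro _ ⟨y, rfl⟩
  have hFy := hF.mem_Icc y.2
  have hGy := hG.mem_Icc y.2
  exact abs_sub_le_iff.2 ⟨by linarith [hFy.2, hGy.1], by linarith [hFy.1, hGy.2]⟩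

theorem dsup_le {F G : ℝ → ℝ} {b : ℝ} (h : ∀ x ∈ Icc (0:ℝ) 1, |F x - G x| ≤ b) :
    dsup F G ≤ b :=
  haveI : Nonempty (Icc (0:ℝ) 1) := ⟨⟨0, left_mem_Icc.2 zero_le_one⟩⟩
  ciSup_le fun x => h x x.2

theorem abs_mul_add_add_sub_mul_add_add_le {a b u v s t r : ℝ} (ha : 0 ≤ a) (hv : |v| ≤ 1) :
    |(a * u + s + r) - (b * v + t + r)| ≤ a * |u - v| + |a - b| + |s - t| := by
  have hsplit : (a * u + s + r) - (b * v + t + r) = a * (u - v) + (a - b) * v + (s - t) := by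
    ring
  have hmid : |(a - b) * v| ≤ |a - b| := by
    simpa [abs_mul] using mul_le_mul_of_nonneg_left hv (abs_nonneg (a - b))
  rw [hsplit]
  calc |a * (u - v) + (a - b) * v + (s - t)|
      ≤ |a * (u - v)| + |(a - b) * v| + |s - t| :=
        abs_add_three (a * (u - v)) ((a - b) * v) (s - t)
    _ ≤ a * |u - v| + |a - b| + |s - t| := by
      rw [abs_mul, abs_of_nonneg ha]; linarith

theorem Finset.abs_sub_add_abs_sum_Iio_sub_le {ι : Type*} [Fintype ι] [LinearOrder ι]
    [LocallyFiniteOrderBot ι] (f g : ι → ℝ) (i : ι) :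
    |f i - g i| + |∑ j ∈ Iio i, f j - ∑ j ∈ Iio i, g j| ≤ ∑ j, |f j - g j| := by
  classical
  calc |f i - g i| + |∑ j ∈ Iio i, f j - ∑ j ∈ Iio i, g j|
      ≤ |f i - g i| + ∑ j ∈ Iio i, |f j - g j| := by
        rw [← sum_sub_distrib]
        gcongr
        exact abs_sum_le_sum_abs _ _
    _ = ∑ j ∈ Iic i, |f j - g j| := by
        rw [← Iio_insert, sum_insert notMem_Iio_self]
    _ ≤ ∑ j, |f j - g j| := sum_le_univ_sum_of_nonneg fun j => abs_nonneg _

theorem stmt6_general (n : ℕ) (p q : Fin (n+1) → ℝ) (δ : Fin n → ℝ)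
    (winv : Fin (n+1) → ℝ → ℝ)
    (F₁ F₂ : ℝ → ℝ)
    (hF₁ : IsDF F₁) (hF₂ : IsDF F₂)
    (hp : ∀ i, 0 ≤ p i)
    (hfix : ∀ x ∈ Set.Icc (0:ℝ) 1, ∃ i : Fin (n+1),
      winv i x ∈ Set.Icc (0:ℝ) 1 ∧
      F₁ x = p i * F₁ (winv i x) + (∑ j ∈ Finset.Iio i, p j) +
        (∑ j ∈ Finset.filter (fun j : Fin n => (j : ℕ) < (i : ℕ)) Finset.univ, δ j) ∧
      F₂ x = q i * F₂ (winv i x) + (∑ j ∈ Finset.Iio i, q j) +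
        (∑ j ∈ Finset.filter (fun j : Fin n => (j : ℕ) < (i : ℕ)) Finset.univ, δ j))
    (hc : Finset.univ.sup' Finset.univ_nonempty (fun i => max (p i) (q i)) < 1) :
    dsup F₁ F₂ ≤
      (1 / (1 - Finset.univ.sup' Finset.univ_nonempty (fun i => max (p i) (q i)))) *
        ∑ j, |p j - q j| := by
  set c := Finset.univ.sup' Finset.univ_nonempty (fun i => max (p i) (q i))
  have hpc : ∀ i, p i ≤ c := fun i =>
    (le_max_left _ _).trans (Finset.le_sup' (fun i => max (p i) (q i)) (Finset.mem_univ i))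
  have hc0 : 0 ≤ c := (hp 0).trans (hpc 0)
  have key : dsup F₁ F₂ ≤ c * dsup F₁ F₂ + ∑ j, |p j - q j| := dsup_le fun x hx => by
    obtain ⟨i, hw, h₁, h₂⟩ := hfix x hx
    rw [h₁, h₂]
    calc _ ≤ p i * |F₁ (winv i x) - F₂ (winv i x)| + |p i - q i|
          + |∑ j ∈ Finset.Iio i, p j - ∑ j ∈ Finset.Iio i, q j| :=
          abs_mul_add_add_sub_mul_add_add_le (hp i) (hF₂.abs_le_one hw)
      _ ≤ c * dsup F₁ F₂ + ∑ j, |p j - q j| := by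
          have := Finset.abs_sub_add_abs_sum_Iio_sub_le p q i
          have := mul_le_mul (hpc i) (abs_sub_le_dsup hF₁ hF₂ hw) (abs_nonneg _) hc0
          linarith
  rw [one_div, ← div_eq_inv_mul, le_div_iff₀ (sub_pos.2 hc)]
  linarith

/-- Stability of the fixed point with respect to the parameters: if `F₁` and `F₂`
are fixed points of `T_p` and `T_q` (same maps `winv` and same shifts `δ`), and
`c = max_i max (p i) (q i) < 1`, then
`d_sup (F₁, F₂) ≤ (1/(1-c)) · ∑_j |p j - q j|`. -/
theorem stmt6 (n : ℕ) (p q : Fin (n+1) → ℝ) (δ : Fin n → ℝ)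
    (winv : Fin (n+1) → ℝ → ℝ)
    (F₁ F₂ : ℝ → ℝ)
    (hF₁ : IsDF F₁) (hF₂ : IsDF F₂)
    (hp : ∀ i, 0 ≤ p i) (hq : ∀ i, 0 ≤ q i) (hδ : ∀ j, 0 ≤ δ j)
    (hsump : ∑ i, p i + ∑ j, δ j = 1)
    (hsumq : ∑ i, q i + ∑ j, δ j = 1)
    (hfix : ∀ x ∈ Set.Icc (0:ℝ) 1, ∃ i : Fin (n+1),
      winv i x ∈ Set.Icc (0:ℝ) 1 ∧
      F₁ x = p i * F₁ (winv i x) + (∑ j ∈ Finset.Iio i, p j) +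
        (∑ j ∈ Finset.filter (fun j : Fin n => (j : ℕ) < (i : ℕ)) Finset.univ, δ j) ∧
      F₂ x = q i * F₂ (winv i x) + (∑ j ∈ Finset.Iio i, q j) +
        (∑ j ∈ Finset.filter (fun j : Fin n => (j : ℕ) < (i : ℕ)) Finset.univ, δ j))
    (hc : Finset.univ.sup' Finset.univ_nonempty (fun i => max (p i) (q i)) < 1) :
    dsup F₁ F₂ ≤
      (1 / (1 - Finset.univ.sup' Finset.univ_nonempty (fun i => max (p i) (q i)))) *
        ∑ j, |p j - q j| :=
  stmt6_general n p q δ winv F₁ F₂ hF₁ hF₂ hp hfix hc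
end

section
/- The interpolating IFS operator T_F is a contraction with constant c = max_i (F(x_i) − F(x_{i−1})), and its action preserves the interpolation property: for any distribution function u, T_F u(x_i) tends to F(x_i) at the fixed point; in particular if max_i (F(x_i)−F(x_{i−1})) < 1 then T_F has a unique fixed point F̃ with F̃(x_i)=F(x_i) for all i. -/
/-!
On the piece `[x_{i-1}, x_i)` the operator rescales `u` affinely onto `[0, 1)` and multiplies
it by `p_i = F(x_i) - F(x_{i-1})`, so `|T u - T v| ≤ p_i ‖u - v‖` there: `T` is Lipschitz with
constant `c = max p_i`. It maps distribution functions to distribution functions, and these form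
a closed subset of the bounded functions on `[0, 1]` with the sup norm (right-continuity survives
uniform limits), so for `c < 1` Banach's fixed-point theorem yields a unique fixed point. At a
node, `T u (x_{i-1}) = p_i u(0) + F(x_{i-1}) = F(x_{i-1})`, so the fixed point interpolates `F`.
-/

open Set Filter Topology
open scoped ENNReal

theorem isDF_id : IsDF id :=
  ⟨monotoneOn_id, fun _ _ => continuousWithinAt_id, rfl, rfl⟩

namespace IsDF

variable {u v : ℝ → ℝ}

theorem mem_Icc_s14 (hu : IsDF u) {t : ℝ} (ht : t ∈ Icc (0:ℝ) 1) : u t ∈ Icc (0:ℝ) 1 :=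
  ⟨hu.2.2.1 ▸ hu.1 (left_mem_Icc.2 zero_le_one) ht ht.1,
    hu.2.2.2 ▸ hu.1 ht (right_mem_Icc.2 zero_le_one) ht.2⟩

theorem congr (hu : IsDF u) (h : EqOn u v (Icc 0 1)) : IsDF v := by
  obtain ⟨hmono, hright, h0, h1⟩ := hu
  refine ⟨hmono.congr h, fun a ha => ?_, h (left_mem_Icc.2 zero_le_one) ▸ h0,
    h (right_mem_Icc.2 zero_le_one) ▸ h1⟩
  exact (hright a ha).congr (fun t ht => (h (Icc_subset_Icc_left ha.1 ht)).symm)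
    (h (Ico_subset_Icc_self ha)).symm

theorem bddAbove_range_abs_sub (hu : IsDF u) (hv : IsDF v) :
    BddAbove (range fun t : Icc (0:ℝ) 1 => |u t - v t|) := by
  refine ⟨1, forall_mem_range.2 fun t => abs_sub_le_iff.2 ⟨?_, ?_⟩⟩ <;>
    linarith [(hu.mem_Icc_s14 t.2).1, (hu.mem_Icc_s14 t.2).2, (hv.mem_Icc_s14 t.2).1, (hv.mem_Icc_s14 t.2).2]

end IsDF

section dsup

variable {u v : ℝ → ℝ}

theorem dsup_nonneg : 0 ≤ dsup u v :=
  Real.iSup_nonneg fun _ => abs_nonneg _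

theorem dsup_le_s14 {d : ℝ} (hd : 0 ≤ d) (h : ∀ t ∈ Icc (0:ℝ) 1, |u t - v t| ≤ d) :
    dsup u v ≤ d :=
  Real.iSup_le (fun t => h t t.2) hd

theorem abs_sub_le_dsup_s14 (h : BddAbove (range fun t : Icc (0:ℝ) 1 => |u t - v t|)) {t : ℝ}
    (ht : t ∈ Icc (0:ℝ) 1) : |u t - v t| ≤ dsup u v :=
  le_ciSup h ⟨t, ht⟩

theorem dsup_congr {u' v' : ℝ → ℝ} (hu : EqOn u u' (Icc 0 1)) (hv : EqOn v v' (Icc 0 1)) :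
    dsup u v = dsup u' v' :=
  iSup_congr fun t => by rw [hu t.2, hv t.2]

theorem eqOn_of_dsup_le_mul (h : BddAbove (range fun t : Icc (0:ℝ) 1 => |u t - v t|))
    {c : ℝ} (hc : c < 1) (hle : dsup u v ≤ c * dsup u v) : EqOn u v (Icc 0 1) := by
  have hzero : dsup u v ≤ 0 := by nlinarith [dsup_nonneg (u := u) (v := v)]
  exact fun t ht => sub_eq_zero.1 (abs_nonpos_iff.1 ((abs_sub_le_dsup_s14 h ht).trans hzero))

end dsup

section BoundedFunctions

local notation "ℓ∞" => lp (fun _ : Icc (0:ℝ) 1 => ℝ) ∞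

noncomputable def extendByZero (f : ℓ∞) : ℝ → ℝ :=
  fun t => if h : t ∈ Icc (0:ℝ) 1 then f ⟨t, h⟩ else 0

theorem extendByZero_of_mem (f : ℓ∞) {t : ℝ} (ht : t ∈ Icc (0:ℝ) 1) :
    extendByZero f t = f ⟨t, ht⟩ :=
  dif_pos ht

theorem dist_extendByZero_le (f g : ℓ∞) (t : ℝ) :
    dist (extendByZero f t) (extendByZero g t) ≤ dist f g := by
  by_cases ht : t ∈ Icc (0:ℝ) 1
  · rw [extendByZero_of_mem f ht, extendByZero_of_mem g ht, dist_eq_norm, dist_eq_norm]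
    simpa using lp.norm_apply_le_norm ENNReal.top_ne_zero (f - g) ⟨t, ht⟩
  · simp [extendByZero, ht]

theorem continuous_extendByZero_apply (t : ℝ) : Continuous fun f : ℓ∞ => extendByZero f t :=
  (LipschitzWith.of_dist_le_mul (K := 1) fun f g => by
    simpa using dist_extendByZero_le f g t).continuous

theorem dist_eq_dsup_extendByZero (f g : ℓ∞) :
    dist f g = dsup (extendByZero f) (extendByZero g) := by
  rw [dist_eq_norm, lp.norm_eq_ciSup, dsup]
  refine iSup_congr fun t => ?_
  rw [extendByZero_of_mem f t.2, extendByZero_of_mem g t.2]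
  simp [Real.norm_eq_abs]

theorem isClosed_setOf_isDF_extendByZero : IsClosed {f : ℓ∞ | IsDF (extendByZero f)} := by
  refine isClosed_of_closure_subset fun f hf => ⟨fun s hs t ht hst => ?_, fun a ha => ?_, ?_, ?_⟩
  · exact (isClosed_le (continuous_extendByZero_apply s)
      (continuous_extendByZero_apply t)).closure_subset_iff.2 (fun g hg => hg.1 hs ht hst) hf
  · refine continuousWithinAt_of_locally_uniform_approx_of_continuousWithinAt
      (left_mem_Icc.2 ha.2.le) fun U hU => ?_
    obtain ⟨ε, hε, hεU⟩ := Metric.mem_uniformity_dist.1 hU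
    obtain ⟨g, hg, hfg⟩ := Metric.mem_closure_iff.1 hf ε hε
    exact ⟨_, self_mem_nhdsWithin, extendByZero g, hg.2.1 a ha,
      fun y _ => hεU ((dist_extendByZero_le f g y).trans_lt hfg)⟩
  · exact (isClosed_eq (continuous_extendByZero_apply 0)
      continuous_const).closure_subset_iff.2 (fun g hg => hg.2.2.1) hf
  · exact (isClosed_eq (continuous_extendByZero_apply 1)
      continuous_const).closure_subset_iff.2 (fun g hg => hg.2.2.2) hf

noncomputable def IsDF.toLp {u : ℝ → ℝ} (hu : IsDF u) : ℓ∞ :=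
  ⟨fun t => u t, memℓp_infty ⟨1, forall_mem_range.2 fun t => by
    rw [Real.norm_eq_abs, abs_le]
    constructor <;> linarith [(hu.mem_Icc_s14 t.2).1, (hu.mem_Icc_s14 t.2).2]⟩⟩

theorem IsDF.eqOn_extendByZero_toLp {u : ℝ → ℝ} (hu : IsDF u) :
    EqOn u (extendByZero hu.toLp) (Icc 0 1) :=
  fun _ ht => (extendByZero_of_mem hu.toLp ht).symm

theorem IsDF.isDF_extendByZero_toLp {u : ℝ → ℝ} (hu : IsDF u) : IsDF (extendByZero hu.toLp) :=
  hu.congr hu.eqOn_extendByZero_toLp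

theorem exists_isDF_fixedPoint_of_dsup_le {S : (ℝ → ℝ) → ℝ → ℝ} {c : ℝ}
    (hS : ∀ u, IsDF u → IsDF (S u))
    (hSc : ∀ u v, IsDF u → IsDF v → dsup (S u) (S v) ≤ c * dsup u v) (hc : c < 1) :
    ∃ u, IsDF u ∧ EqOn (S u) u (Icc 0 1) := by
  let D := {f : ℓ∞ | IsDF (extendByZero f)}
  have : CompleteSpace D := isClosed_setOf_isDF_extendByZero.isComplete.completeSpace_coe
  have : Nonempty D := ⟨⟨isDF_id.toLp, isDF_id.isDF_extendByZero_toLp⟩⟩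
  let Φ : D → D := fun f => ⟨(hS _ f.2).toLp, (hS _ f.2).isDF_extendByZero_toLp⟩
  have hΦ : ContractingWith c.toNNReal Φ := by
    refine ⟨Real.toNNReal_lt_one.2 hc, LipschitzWith.of_dist_le_mul fun f g => ?_⟩
    rw [Subtype.dist_eq, Subtype.dist_eq, dist_eq_dsup_extendByZero, dist_eq_dsup_extendByZero,
      ← dsup_congr (hS _ f.2).eqOn_extendByZero_toLp (hS _ g.2).eqOn_extendByZero_toLp,
      Real.coe_toNNReal']
    exact (hSc _ _ f.2 g.2).trans (mul_le_mul_of_nonneg_right (le_max_left c 0) dsup_nonneg)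
  set y := ContractingWith.fixedPoint Φ hΦ
  refine ⟨extendByZero y, y.2, fun t ht => ?_⟩
  have hy : extendByZero (Φ y).1 t = extendByZero y t := by
    rw [ContractingWith.fixedPoint_isFixedPt hΦ]
  rwa [← (hS _ y.2).eqOn_extendByZero_toLp ht] at hy

end BoundedFunctions

theorem exists_mem_Ico_castSucc_succ {α : Type*} [LinearOrder α] {n : ℕ} {x : Fin (n+1) → α}
    {t : α} (h0 : x 0 ≤ t) (h1 : t < x (Fin.last n)) :
    ∃ i : Fin n, t ∈ Ico (x i.castSucc) (x i.succ) := by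
  obtain ⟨j, hj, hmin⟩ := exists_minimal_of_wellFoundedLT (fun j => t < x j) ⟨_, h1⟩
  obtain ⟨i, rfl⟩ := Fin.exists_succ_eq.2 (show j ≠ 0 by rintro rfl; exact h0.not_gt hj)
  exact ⟨i, not_lt.1 fun h => Fin.castSucc_lt_succ.not_ge (hmin h Fin.castSucc_lt_succ.le), hj⟩

theorem sub_div_sub_mem_Ico {a b t : ℝ} (ht : t ∈ Ico a b) : (t - a) / (b - a) ∈ Ico 0 1 := by
  have hab : 0 < b - a := by linarith [ht.1, ht.2]
  exact ⟨div_nonneg (sub_nonneg.2 ht.1) hab.le, (div_lt_one hab).2 (by linarith [ht.2])⟩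

section InterpolatingIFS

variable {n : ℕ}

-- The paper's `p_{i+1}`: pieces are indexed from `0` here.
def ifsWeight (x : Fin (n+2) → ℝ) (F : ℝ → ℝ) (i : Fin (n+1)) : ℝ :=
  F (x i.succ) - F (x i.castSucc)

def maxIfsWeight (x : Fin (n+2) → ℝ) (F : ℝ → ℝ) : ℝ :=
  Finset.univ.sup' Finset.univ_nonempty (ifsWeight x F)

structure IsInterpolatingIFS (x : Fin (n+2) → ℝ) (F : ℝ → ℝ) (T : (ℝ → ℝ) → ℝ → ℝ) :
    Prop where
  strictMono : StrictMono x
  node_zero : x 0 = 0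
  node_last : x (Fin.last (n+1)) = 1
  isDF : IsDF F
  apply_of_mem_Ico : ∀ u : ℝ → ℝ, ∀ i : Fin (n+1), ∀ t ∈ Ico (x i.castSucc) (x i.succ),
    T u t = ifsWeight x F i * u ((t - x i.castSucc) / (x i.succ - x i.castSucc)) + F (x i.castSucc)
  apply_one : ∀ u : ℝ → ℝ, T u 1 = 1

namespace IsInterpolatingIFS

variable {x : Fin (n+2) → ℝ} {F : ℝ → ℝ} {T : (ℝ → ℝ) → ℝ → ℝ} {u v : ℝ → ℝ}

theorem node_mem_Icc (hT : IsInterpolatingIFS x F T) (j : Fin (n+2)) : x j ∈ Icc 0 1 :=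
  ⟨hT.node_zero ▸ hT.strictMono.monotone (Fin.zero_le j),
    hT.node_last ▸ hT.strictMono.monotone (Fin.le_last j)⟩

theorem ifsWeight_nonneg (hT : IsInterpolatingIFS x F T) (i : Fin (n+1)) :
    0 ≤ ifsWeight x F i :=
  sub_nonneg.2 (hT.isDF.1 (hT.node_mem_Icc _) (hT.node_mem_Icc _)
    (hT.strictMono Fin.castSucc_lt_succ).le)

theorem maxIfsWeight_nonneg (hT : IsInterpolatingIFS x F T) : 0 ≤ maxIfsWeight x F :=
  (hT.ifsWeight_nonneg 0).trans (Finset.le_sup' _ (Finset.mem_univ 0))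

theorem exists_mem_Ico (hT : IsInterpolatingIFS x F T) {t : ℝ} (ht : t ∈ Ico (0:ℝ) 1) :
    ∃ i : Fin (n+1), t ∈ Ico (x i.castSucc) (x i.succ) :=
  exists_mem_Ico_castSucc_succ (hT.node_zero ▸ ht.1) (hT.node_last ▸ ht.2)

theorem apply_mem_Icc (hT : IsInterpolatingIFS x F T) (hu : IsDF u) {i : Fin (n+1)} {t : ℝ}
    (ht : t ∈ Ico (x i.castSucc) (x i.succ)) : T u t ∈ Icc (F (x i.castSucc)) (F (x i.succ)) := by
  have hσ := hu.mem_Icc_s14 (Ico_subset_Icc_self (sub_div_sub_mem_Ico ht))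
  have hp := hT.ifsWeight_nonneg i
  rw [hT.apply_of_mem_Ico u i t ht]
  simp only [ifsWeight] at hp ⊢
  constructor <;> nlinarith [hσ.1, hσ.2]

theorem apply_le_one (hT : IsInterpolatingIFS x F T) (hu : IsDF u) {t : ℝ}
    (ht : t ∈ Icc (0:ℝ) 1) : T u t ≤ 1 := by
  rcases ht.2.eq_or_lt with rfl | ht1
  · exact (hT.apply_one u).le
  · obtain ⟨i, hi⟩ := hT.exists_mem_Ico ⟨ht.1, ht1⟩
    exact (hT.apply_mem_Icc hu hi).2.trans (hT.isDF.mem_Icc_s14 (hT.node_mem_Icc _)).2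

theorem dsup_apply_le (hT : IsInterpolatingIFS x F T) (hu : IsDF u) (hv : IsDF v) :
    dsup (T u) (T v) ≤ maxIfsWeight x F * dsup u v := by
  have hc := mul_nonneg hT.maxIfsWeight_nonneg (dsup_nonneg (u := u) (v := v))
  refine dsup_le_s14 hc fun t ht => ?_
  rcases ht.2.eq_or_lt with rfl | ht1
  · simpa [hT.apply_one] using hc
  obtain ⟨i, hi⟩ := hT.exists_mem_Ico ⟨ht.1, ht1⟩
  rw [hT.apply_of_mem_Ico u i t hi, hT.apply_of_mem_Ico v i t hi, add_sub_add_right_eq_sub,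
    ← mul_sub, abs_mul, abs_of_nonneg (hT.ifsWeight_nonneg i)]
  exact mul_le_mul (Finset.le_sup' _ (Finset.mem_univ i))
    (abs_sub_le_dsup_s14 (hu.bddAbove_range_abs_sub hv) (Ico_subset_Icc_self (sub_div_sub_mem_Ico hi)))
    (abs_nonneg _) hT.maxIfsWeight_nonneg

theorem monotoneOn_apply (hT : IsInterpolatingIFS x F T) (hu : IsDF u) :
    MonotoneOn (T u) (Icc 0 1) := by
  intro s hs t ht hst
  rcases ht.2.eq_or_lt with rfl | ht1
  · exact (hT.apply_le_one hu hs).trans (hT.apply_one u).ge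
  obtain ⟨i, hi⟩ := hT.exists_mem_Ico ⟨hs.1, hst.trans_lt ht1⟩
  obtain ⟨j, hj⟩ := hT.exists_mem_Ico ⟨ht.1, ht1⟩
  have hij : i ≤ j := le_of_not_gt fun hji => (hj.2.trans_le
    ((hT.strictMono.monotone (Fin.succ_le_castSucc_iff.2 hji)).trans (hi.1.trans hst))).false
  rcases hij.eq_or_lt with rfl | hij
  · have hd : 0 ≤ x i.succ - x i.castSucc := sub_nonneg.2 (hi.1.trans hi.2.le)
    rw [hT.apply_of_mem_Ico u i s hi, hT.apply_of_mem_Ico u i t hj]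
    exact add_le_add_left (mul_le_mul_of_nonneg_left (hu.1
      (Ico_subset_Icc_self (sub_div_sub_mem_Ico hi)) (Ico_subset_Icc_self (sub_div_sub_mem_Ico hj))
      (div_le_div_of_nonneg_right (sub_le_sub_right hst _) hd)) (hT.ifsWeight_nonneg i)) _
  · calc T u s ≤ F (x i.succ) := (hT.apply_mem_Icc hu hi).2
      _ ≤ F (x j.castSucc) := hT.isDF.1 (hT.node_mem_Icc _) (hT.node_mem_Icc _)
          (hT.strictMono.monotone (Fin.succ_le_castSucc_iff.2 hij))
      _ ≤ T u t := (hT.apply_mem_Icc hu hj).1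

theorem continuousWithinAt_apply (hT : IsInterpolatingIFS x F T) (hu : IsDF u) {a : ℝ}
    (ha : a ∈ Ico (0:ℝ) 1) : ContinuousWithinAt (T u) (Icc a 1) a := by
  obtain ⟨i, hi⟩ := hT.exists_mem_Ico ha
  set σ : ℝ → ℝ := fun t => (t - x i.castSucc) / (x i.succ - x i.castSucc)
  have hd : 0 ≤ x i.succ - x i.castSucc := sub_nonneg.2 (hi.1.trans hi.2.le)
  have hσa : σ a ∈ Ico 0 1 := sub_div_sub_mem_Ico hi
  have huσ : ContinuousWithinAt (u ∘ σ) (Ici a) a :=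
    ((continuousWithinAt_Icc_iff_Ici hσa.2).1 (hu.2.1 _ hσa)).comp
      (by fun_prop : Continuous σ).continuousWithinAt
      fun t ht => div_le_div_of_nonneg_right (sub_le_sub_right ht _) hd
  rw [continuousWithinAt_Icc_iff_Ici ha.2, ← continuousWithinAt_Ico_iff_Ici hi.2]
  exact ((continuousWithinAt_const.mul (huσ.mono Ico_subset_Ici_self)).add
    continuousWithinAt_const).congr (fun t ht => hT.apply_of_mem_Ico u i t ⟨hi.1.trans ht.1, ht.2⟩)
    (hT.apply_of_mem_Ico u i a hi)

theorem apply_node (hT : IsInterpolatingIFS x F T) (hu : IsDF u) (j : Fin (n+2)) :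
    T u (x j) = F (x j) := by
  induction j using Fin.lastCases with
  | last => rw [hT.node_last, hT.apply_one, hT.isDF.2.2.2]
  | cast i =>
    rw [hT.apply_of_mem_Ico u i _ ⟨le_rfl, hT.strictMono Fin.castSucc_lt_succ⟩, sub_self,
      zero_div, hu.2.2.1, mul_zero, zero_add]

theorem isDF_apply (hT : IsInterpolatingIFS x F T) (hu : IsDF u) : IsDF (T u) :=
  ⟨hT.monotoneOn_apply hu, fun _ ha => hT.continuousWithinAt_apply hu ha,
    by simpa [hT.node_zero, hT.isDF.2.2.1] using hT.apply_node hu 0, hT.apply_one u⟩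

end IsInterpolatingIFS

end InterpolatingIFS

theorem stmt14_general (n : ℕ) (x : Fin (n+2) → ℝ)
    (hx : StrictMono x) (hx0 : x 0 = 0) (hx1 : x (Fin.last (n+1)) = 1)
    (F : ℝ → ℝ) (hF : IsDF F)
    (T : (ℝ → ℝ) → (ℝ → ℝ))
    (hT : ∀ u : ℝ → ℝ, ∀ i : Fin (n+1), ∀ t ∈ Set.Ico (x i.castSucc) (x i.succ),
      T u t = (F (x i.succ) - F (x i.castSucc)) *
          u ((t - x i.castSucc) / (x i.succ - x i.castSucc)) + F (x i.castSucc))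
    (hT1 : ∀ u : ℝ → ℝ, T u 1 = 1) :
    (∀ u v : ℝ → ℝ, IsDF u → IsDF v →
      dsup (T u) (T v) ≤
        (Finset.univ.sup' Finset.univ_nonempty
          (fun i : Fin (n+1) => F (x i.succ) - F (x i.castSucc))) * dsup u v) ∧
    ((Finset.univ.sup' Finset.univ_nonempty
        (fun i : Fin (n+1) => F (x i.succ) - F (x i.castSucc))) < 1 →
      ∃ Ft : ℝ → ℝ, IsDF Ft ∧
        (∀ t ∈ Set.Icc (0:ℝ) 1, T Ft t = Ft t) ∧
        (∀ i : Fin (n+2), Ft (x i) = F (x i)) ∧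
        (∀ G : ℝ → ℝ, IsDF G → (∀ t ∈ Set.Icc (0:ℝ) 1, T G t = G t) →
          ∀ t ∈ Set.Icc (0:ℝ) 1, G t = Ft t)) := by
  have hIFS : IsInterpolatingIFS x F T := ⟨hx, hx0, hx1, hF, hT, hT1⟩
  refine ⟨fun u v hu hv => hIFS.dsup_apply_le hu hv, fun hc => ?_⟩
  obtain ⟨Ft, hFt, hfix⟩ := exists_isDF_fixedPoint_of_dsup_le (fun u hu => hIFS.isDF_apply hu)
    (fun u v hu hv => hIFS.dsup_apply_le hu hv) hc
  refine ⟨Ft, hFt, hfix, fun i => ?_, fun G hG hGfix => ?_⟩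
  · rw [← hfix (hIFS.node_mem_Icc i), hIFS.apply_node hFt i]
  · refine eqOn_of_dsup_le_mul (hG.bddAbove_range_abs_sub hFt) hc ?_
    have hle := hIFS.dsup_apply_le hG hFt
    rwa [dsup_congr hGfix hfix] at hle

/-- The interpolating IFS operator
`T_F u t = (F (x_{i+1}) - F (x_i)) · u ((t - x_i)/(x_{i+1} - x_i)) + F (x_i)`
is a contraction with constant `c = max_i (F (x_{i+1}) - F (x_i))` on distribution
functions; if `c < 1` it has a (unique) fixed point `F̃` which interpolates `F`
at all the nodes: `F̃ (x_i) = F (x_i)`. -/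
theorem stmt14 (n : ℕ) (x : Fin (n+2) → ℝ)
    (hx : StrictMono x) (hx0 : x 0 = 0) (hx1 : x (Fin.last (n+1)) = 1)
    (F : ℝ → ℝ) (hF : IsDF F)
    (hFc : ContinuousOn F (Set.Icc 0 1)) (hFs : StrictMonoOn F (Set.Icc 0 1))
    (T : (ℝ → ℝ) → (ℝ → ℝ))
    (hT : ∀ u : ℝ → ℝ, ∀ i : Fin (n+1), ∀ t ∈ Set.Ico (x i.castSucc) (x i.succ),
      T u t = (F (x i.succ) - F (x i.castSucc)) *
          u ((t - x i.castSucc) / (x i.succ - x i.castSucc)) + F (x i.castSucc))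
    (hT1 : ∀ u : ℝ → ℝ, T u 1 = 1) :
    (∀ u v : ℝ → ℝ, IsDF u → IsDF v →
      dsup (T u) (T v) ≤
        (Finset.univ.sup' Finset.univ_nonempty
          (fun i : Fin (n+1) => F (x i.succ) - F (x i.castSucc))) * dsup u v) ∧
    ((Finset.univ.sup' Finset.univ_nonempty
        (fun i : Fin (n+1) => F (x i.succ) - F (x i.castSucc))) < 1 →
      ∃ Ft : ℝ → ℝ, IsDF Ft ∧
        (∀ t ∈ Set.Icc (0:ℝ) 1, T Ft t = Ft t) ∧
        (∀ i : Fin (n+2), Ft (x i) = F (x i)) ∧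
        (∀ G : ℝ → ℝ, IsDF G → (∀ t ∈ Set.Icc (0:ℝ) 1, T G t = G t) →
          ∀ t ∈ Set.Icc (0:ℝ) 1, G t = Ft t)) :=
  stmt14_general n x hx hx0 hx1 F hF T hT hT1
end

section
/- If the points x_i are chosen as quantiles x_i = F^{-1}(i/(n+1)) of a continuous strictly increasing distribution function F, then the fixed point F̃ of the quantile IFS operator T_F u(x) = (1/(n+1))·u((x−x_{i−1})/(x_i−x_{i−1})) + (i−1)/(n+1) satisfies d_sup(F̃, F) ≤ 1/(n+1). -/
open Set Filter Topology

/-!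
Both `F̃` and `F` are non-decreasing and take the value `i/(n+1)` at every node `x_i`:
for `F` this is the quantile condition, for `F̃` it is the fixed-point equation at `t = x_i`
together with `F̃ 0 = 0`. On each cell `[x_i, x_{i+1}]` both functions are therefore trapped
between `i/(n+1)` and `(i+1)/(n+1)`, so they differ by at most `1/(n+1)` there, and the cells
cover `[0,1]`.
-/

theorem Fin.exists_castSucc_le_le_succ {α : Type*} [LinearOrder α] :
    ∀ {m : ℕ} (x : Fin (m + 2) → α) {t : α}, x 0 ≤ t → t ≤ x (Fin.last (m + 1)) →
      ∃ i : Fin (m + 1), x i.castSucc ≤ t ∧ t ≤ x i.succ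
  | 0, _, _, h0, hlast => ⟨0, h0, hlast⟩
  | m + 1, x, t, h0, hlast => by
    by_cases ht : t ≤ x (Fin.last (m + 1)).castSucc
    · obtain ⟨i, hi⟩ := exists_castSucc_le_le_succ (fun k => x k.castSucc) h0 ht
      exact ⟨i.castSucc, hi⟩
    · exact ⟨Fin.last (m + 1), (not_le.mp ht).le, hlast⟩

theorem MonotoneOn.abs_sub_le_of_eq_of_eq {α : Type*} [Preorder α] {s : Set α} {f g : α → ℝ}
    (hf : MonotoneOn f s) (hg : MonotoneOn g s) {a b t : α} (ha : a ∈ s) (hb : b ∈ s)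
    (ht : t ∈ s) (hat : a ≤ t) (htb : t ≤ b) (hfga : f a = g a) (hfgb : f b = g b) :
    |f t - g t| ≤ g b - g a := by
  have := hf ha ht hat
  have := hf ht hb htb
  have := hg ha ht hat
  have := hg ht hb htb
  rw [abs_sub_le_iff]
  constructor <;> linarith

theorem quantileIFS_fixedPoint_apply_node {n : ℕ} {Ft : ℝ → ℝ} {x : Fin (n + 2) → ℝ}
    (hx : StrictMono x) (hlast : x (Fin.last (n + 1)) = 1) (hFt0 : Ft 0 = 0) (hFt1 : Ft 1 = 1)
    (hfix : ∀ i : Fin (n+1), ∀ t ∈ Set.Ico (x i.castSucc) (x i.succ),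
      Ft t = (1 / ((n : ℝ) + 1)) *
          Ft ((t - x i.castSucc) / (x i.succ - x i.castSucc)) + (i : ℕ) / ((n : ℝ) + 1))
    (i : Fin (n + 2)) : Ft (x i) = (i : ℕ) / ((n : ℝ) + 1) := by
  induction i using Fin.lastCases with
  | last =>
    rw [hlast, hFt1, Fin.val_last]
    push_cast
    exact (div_self (by positivity)).symm
  | cast j =>
    rw [hfix j _ ⟨le_rfl, hx (Fin.castSucc_lt_succ (i := j))⟩, sub_self, zero_div, hFt0,
      mul_zero, zero_add, Fin.val_castSucc]

theorem stmt15_general (n : ℕ) (F : ℝ → ℝ) (hF : IsDF F)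
    (hFs : StrictMonoOn F (Set.Icc 0 1))
    (x : Fin (n+2) → ℝ) (hx : StrictMono x)
    (hxmem : ∀ i, x i ∈ Set.Icc (0:ℝ) 1)
    (hquant : ∀ i : Fin (n+2), F (x i) = (i : ℕ) / ((n : ℝ) + 1))
    (Ft : ℝ → ℝ) (hFt : IsDF Ft)
    (hfix : ∀ i : Fin (n+1), ∀ t ∈ Set.Ico (x i.castSucc) (x i.succ),
      Ft t = (1 / ((n : ℝ) + 1)) *
          Ft ((t - x i.castSucc) / (x i.succ - x i.castSucc)) + (i : ℕ) / ((n : ℝ) + 1)) :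
    dsup Ft F ≤ 1 / ((n : ℝ) + 1) := by
  obtain ⟨hFmono, -, hF0, hF1⟩ := hF
  obtain ⟨hFtmono, -, hFt0, hFt1⟩ := hFt
  have hfirst : x 0 = 0 :=
    hFs.injOn (hxmem 0) (by norm_num) (by rw [hquant, hF0, Fin.val_zero, Nat.cast_zero, zero_div])
  have hlast : x (Fin.last (n + 1)) = 1 :=
    hFs.injOn (hxmem _) (by norm_num) (by
      rw [hquant, hF1, Fin.val_last]; push_cast; exact div_self (by positivity))
  have hnodes (i : Fin (n + 2)) : Ft (x i) = F (x i) := by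
    rw [quantileIFS_fixedPoint_apply_node hx hlast hFt0 hFt1 hfix, hquant]
  have : Nonempty (Set.Icc (0:ℝ) 1) := ⟨⟨0, by norm_num⟩⟩
  refine ciSup_le fun ⟨t, ht⟩ => ?_
  obtain ⟨i, hit, hti⟩ :=
    Fin.exists_castSucc_le_le_succ x (hfirst ▸ ht.1) (hlast ▸ ht.2)
  calc |Ft t - F t| ≤ F (x i.succ) - F (x i.castSucc) :=
        hFtmono.abs_sub_le_of_eq_of_eq hFmono (hxmem _) (hxmem _) ht hit hti
          (hnodes _) (hnodes _)
    _ = 1 / ((n : ℝ) + 1) := by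
        rw [hquant, hquant, Fin.val_succ, Fin.val_castSucc]; push_cast; ring

/-- If the nodes are the quantiles `x_i = F⁻¹(i/(n+1))` of a continuous strictly
increasing distribution function `F`, then the fixed point `F̃` of the quantile
IFS operator `T_F u t = (1/(n+1)) u ((t - x_i)/(x_{i+1} - x_i)) + i/(n+1)`
satisfies `d_sup (F̃, F) ≤ 1/(n+1)`. -/
theorem stmt15 (n : ℕ) (F : ℝ → ℝ) (hF : IsDF F)
    (hFc : ContinuousOn F (Set.Icc 0 1)) (hFs : StrictMonoOn F (Set.Icc 0 1))
    (x : Fin (n+2) → ℝ) (hx : StrictMono x)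
    (hxmem : ∀ i, x i ∈ Set.Icc (0:ℝ) 1)
    (hquant : ∀ i : Fin (n+2), F (x i) = (i : ℕ) / ((n : ℝ) + 1))
    (Ft : ℝ → ℝ) (hFt : IsDF Ft)
    (hfix : ∀ i : Fin (n+1), ∀ t ∈ Set.Ico (x i.castSucc) (x i.succ),
      Ft t = (1 / ((n : ℝ) + 1)) *
          Ft ((t - x i.castSucc) / (x i.succ - x i.castSucc)) + (i : ℕ) / ((n : ℝ) + 1))
    (hfix1 : Ft 1 = 1) :
    dsup Ft F ≤ 1 / ((n : ℝ) + 1) :=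
  stmt15_general n F hF hFs x hx hxmem hquant Ft hFt hfix
end
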